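/- arXiv:1703.08898 — 5 statements merged into one kernel-verified Lean document; each statement's English description precedes it below -/
import Mathlib

section
/- Let Ξ ⊆ ℝ^m be a closed convex set, let f : ℝ^m → ℝ be a differentiable convex function, and let Y be the set of minimizers of f over Ξ. Suppose Y is nonempty, closed and bounded. Then for every y ∈ Ξ with y ∉ Y, every λ ∈ (0,1), and z = λ·P_Y(y) + (1−λ)·y, one has 0 < ⟨∇f(z), (y − P_Y(y))/‖y − P_Y(y)‖⟩ ≤ ⟨∇f(y), (y − P_Y(y))/‖y − P_Y(y)‖⟩. -/
open Bornology RealInnerProductSpace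

lemma grad_ineq_aux {m : ℕ} (f : EuclideanSpace ℝ (Fin m) → ℝ)
    (hdiff : Differentiable ℝ f) (hconv : ConvexOn ℝ Set.univ f)
    (a b : EuclideanSpace ℝ (Fin m)) :
    f a + ⟪gradient f a, b - a⟫ ≤ f b := by
  set g : ℝ → ℝ := f ∘ (AffineMap.lineMap a b) with hg
  have hgconv : ConvexOn ℝ Set.univ g := by
    have := hconv.comp_affineMap (AffineMap.lineMap a b)
    simpa using this
  have hder : ∀ t : ℝ, HasDerivAt g ⟪gradient f (AffineMap.lineMap a b t), b - a⟫ t := by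
    intro t
    have hline : HasDerivAt (fun t : ℝ => AffineMap.lineMap a b t) (b - a) t := by
      have heq : (fun t : ℝ => (AffineMap.lineMap a b : ℝ →ᵃ[ℝ] _) t)
          = fun t : ℝ => t • (b - a) + a := by
        funext s; simp [AffineMap.lineMap_apply]
      rw [heq]
      simpa using ((hasDerivAt_id t).smul_const (b - a)).add_const a
    have hf := (hdiff (AffineMap.lineMap a b t)).hasGradientAt.hasFDerivAt
    have := hf.comp_hasDerivAt t hline
    simpa [g, Function.comp, InnerProductSpace.toDual_apply_apply] using this
  have h0 : (0:ℝ) ∈ (Set.univ : Set ℝ) := Set.mem_univ _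
  have hle := hgconv.le_slope_of_hasDerivAt h0 (Set.mem_univ 1) zero_lt_one (hder 0)
  have hs : slope g 0 1 = f b - f a := by
    simp [slope, g, Function.comp]
  rw [hs] at hle
  simpa [g, Function.comp] using add_le_of_le_sub_left (by simpa using hle)

/-- `P` is the Euclidean (metric) projection onto the set `C`. -/
def IsProjOn {m : ℕ} (C : Set (EuclideanSpace ℝ (Fin m)))
    (P : EuclideanSpace ℝ (Fin m) → EuclideanSpace ℝ (Fin m)) : Prop :=
  ∀ x, P x ∈ C ∧ ∀ s ∈ C, ‖x - P x‖ ≤ ‖x - s‖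

/-- Radial growth property of gradients of a convex function: along the segment
from `P_Y(y)` to `y ∉ Y`, the directional derivative in direction
`(y − P_Y(y))/‖y − P_Y(y)‖` is positive and monotone. -/
theorem stmt_7 {m : ℕ}
    (Ξ : Set (EuclideanSpace ℝ (Fin m))) (hΞcl : IsClosed Ξ) (hΞcv : Convex ℝ Ξ)
    (f : EuclideanSpace ℝ (Fin m) → ℝ)
    (hdiff : Differentiable ℝ f) (hconv : ConvexOn ℝ Set.univ f)
    (Y : Set (EuclideanSpace ℝ (Fin m)))
    (hY : Y = {y ∈ Ξ | ∀ s ∈ Ξ, f y ≤ f s})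
    (hYne : Y.Nonempty) (hYcl : IsClosed Y) (hYbd : IsBounded Y)
    (PY : EuclideanSpace ℝ (Fin m) → EuclideanSpace ℝ (Fin m)) (hPY : IsProjOn Y PY) :
    ∀ y ∈ Ξ, y ∉ Y → ∀ lam : ℝ, lam ∈ Set.Ioo (0 : ℝ) 1 →
      ∀ z : EuclideanSpace ℝ (Fin m), z = lam • PY y + (1 - lam) • y →
        0 < ⟪gradient f z, ‖y - PY y‖⁻¹ • (y - PY y)⟫ ∧
          ⟪gradient f z, ‖y - PY y‖⁻¹ • (y - PY y)⟫ ≤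
            ⟪gradient f y, ‖y - PY y‖⁻¹ • (y - PY y)⟫ := by
  intro y hyΞ hyY lam hlam z hz
  obtain ⟨hlam0, hlam1⟩ := hlam
  set p := PY y with hp
  have hpY : p ∈ Y := (hPY y).1
  have hpΞ : p ∈ Ξ := by rw [hY] at hpY; exact hpY.1
  have hpmin : ∀ s ∈ Ξ, f p ≤ f s := by rw [hY] at hpY; exact hpY.2
  have hne : y - p ≠ 0 := by
    intro h
    exact hyY (by rwa [sub_eq_zero.mp h])
  have hd : (0:ℝ) < ‖y - p‖ := norm_pos_iff.mpr hne
  -- z ∈ Ξ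
  have hzΞ : z ∈ Ξ := by
    rw [hz]
    exact hΞcv hpΞ hyΞ hlam0.le (by linarith) (by ring)
  -- y - z = lam • (y - p)
  have hyz : y - z = lam • (y - p) := by
    rw [hz]; module
  -- p - z = -((1 - lam) • (y - p))
  have hpz : p - z = -((1 - lam) • (y - p)) := by
    rw [hz]; module
  -- f p < f z
  have hfpz : f p < f z := by
    rcases lt_or_eq_of_le (hpmin z hzΞ) with h | h
    · exact h
    · exfalso
      have hzY : z ∈ Y := by
        rw [hY]
        exact ⟨hzΞ, fun s hs => h ▸ hpmin s hs⟩
      have hle := (hPY y).2 z hzY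
      rw [← hp, hyz, norm_smul, Real.norm_eq_abs, abs_of_pos hlam0] at hle
      nlinarith
  -- gradient inequalities
  have key1 := grad_ineq_aux f hdiff hconv z p
  have key2 := grad_ineq_aux f hdiff hconv z y
  have key3 := grad_ineq_aux f hdiff hconv y z
  rw [hpz, inner_neg_right, real_inner_smul_right] at key1
  rw [show y - z = lam • (y - p) from hyz, real_inner_smul_right] at key2
  rw [show z - y = -(lam • (y - p)) from by rw [← hyz]; module, inner_neg_right,
    real_inner_smul_right] at key3
  have hzpos : 0 < ⟪gradient f z, y - p⟫ := by nlinarith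
  have hmono : ⟪gradient f z, y - p⟫ ≤ ⟪gradient f y, y - p⟫ := by nlinarith
  constructor
  · rw [real_inner_smul_right]
    positivity
  · rw [real_inner_smul_right, real_inner_smul_right]
    have : (0:ℝ) ≤ ‖y - p‖⁻¹ := by positivity
    exact mul_le_mul_of_nonneg_left hmono this
end

section
/- Let x_1,…,x_n : [0,∞) → ℝ^m be continuous functions, let x*(t) = (1/n)∑_{i=1}^n x_i(t), and suppose lim_{t→∞} (x_i(t) − x*(t)) = 0 for every i. Let q_1,…,q_n : [0,∞) → ℝ be differentiable functions satisfying q̇_i(t) = arctan(exp(‖x_i(t)‖)) with q_i(0) > 0 for every i. Then lim_{t→∞} q_i(t)/q_j(t) = 1 for all i, j ∈ {1,…,n}. -/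
/-!
Since `arctan ∘ exp` is `1/2`-Lipschitz, consensus of the states forces `q̇ᵢ - q̇ⱼ → 0`, so
`qᵢ - qⱼ = o(t)`. On the other hand `q̇ⱼ ≥ arctan 1 = π/4` and `qⱼ(0) > 0` give `qⱼ(t) ≥ π t / 4`,
hence `qᵢ - qⱼ = o(qⱼ)`, i.e. `qᵢ ~ qⱼ`.
-/

open Filter Topology Set Asymptotics Real

theorem lipschitzWith_arctan_exp : LipschitzWith (1 / 2) fun s : ℝ => arctan (exp s) := by
  refine lipschitzWith_of_nnnorm_deriv_le (differentiable_arctan.comp differentiable_exp)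
    fun s => ?_
  rw [(hasDerivAt_exp s).arctan.deriv, ← NNReal.coe_le_coe, coe_nnnorm,
    norm_of_nonneg (by positivity), one_div_mul_eq_div, div_le_iff₀ (by positivity)]
  push_cast
  nlinarith [sq_nonneg (exp s - 1)]

theorem pi_div_four_le_arctan_exp {s : ℝ} (hs : 0 ≤ s) : π / 4 ≤ arctan (exp s) :=
  arctan_one ▸ arctan_strictMono.monotone (one_le_exp hs)

theorem tendsto_arctan_exp_norm_sub_arctan_exp_norm {α E : Type*} [SeminormedAddCommGroup E]
    {l : Filter α} {u v : α → E} (h : Tendsto (fun t => u t - v t) l (𝓝 0)) :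
    Tendsto (fun t => arctan (exp ‖u t‖) - arctan (exp ‖v t‖)) l (𝓝 0) := by
  refine squeeze_zero_norm (fun t => ?_) ((h.norm.const_mul (1 / 2)).trans_eq (by simp))
  calc ‖arctan (exp ‖u t‖) - arctan (exp ‖v t‖)‖
      ≤ 1 / 2 * ‖‖u t‖ - ‖v t‖‖ := by
        simpa [← dist_eq_norm] using lipschitzWith_arctan_exp.dist_le_mul ‖u t‖ ‖v t‖
    _ ≤ 1 / 2 * ‖u t - v t‖ := by gcongr; exact abs_norm_sub_norm_le _ _

theorem isLittleO_id_of_tendsto_derivWithin_zero {E : Type*} [NormedAddCommGroup E]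
    [NormedSpace ℝ E] {f f' : ℝ → E} {a : ℝ}
    (hf : ∀ t, a ≤ t → HasDerivWithinAt f (f' t) (Ici a) t)
    (hf' : Tendsto f' atTop (𝓝 0)) : f =o[atTop] id := by
  refine IsLittleO.of_bound fun ε hε => ?_
  obtain ⟨T, hT⟩ := eventually_atTop.1 <| (eventually_ge_atTop (max a 0)).and <|
    hf'.norm.eventually (ge_mem_nhds (norm_zero.trans_lt (half_pos hε)))
  have hTa : a ≤ T := (le_max_left _ _).trans (hT T le_rfl).1
  have hT0 : 0 ≤ T := (le_max_right _ _).trans (hT T le_rfl).1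
  filter_upwards [(isLittleO_const_id_atTop (f T)).bound (half_pos hε), eventually_ge_atTop T]
    with t hconst htT
  have hmvt : ‖f t - f T‖ ≤ ε / 2 * ‖t - T‖ :=
    (convex_Ici T).norm_image_sub_le_of_norm_hasDerivWithin_le
      (fun s hs => (hf s (hTa.trans hs)).mono (Ici_subset_Ici.2 hTa)) (fun s hs => (hT s hs).2)
      self_mem_Ici htT
  have ht : ‖t - T‖ ≤ ‖id t‖ := by
    rw [id, norm_of_nonneg (sub_nonneg.2 htT), norm_of_nonneg (hT0.trans htT)]; linarith
  calc ‖f t‖ ≤ ‖f T‖ + ‖f t - f T‖ := norm_le_insert' _ _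
    _ ≤ ε / 2 * ‖id t‖ + ε / 2 * ‖id t‖ := by gcongr; exact hmvt.trans (by gcongr)
    _ = ε * ‖id t‖ := by ring

theorem mul_sub_le_sub_of_le_derivWithin {f f' : ℝ → ℝ} {a c : ℝ}
    (hf : ∀ t, a ≤ t → HasDerivWithinAt f (f' t) (Ici a) t) (hc : ∀ t, a ≤ t → c ≤ f' t)
    {t : ℝ} (ht : a ≤ t) : c * (t - a) ≤ f t - f a := by
  have hderiv : ∀ s ∈ interior (Ici a), HasDerivAt f (f' s) s := fun s hs => by
    rw [interior_Ici] at hs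
    exact (hf s hs.le).hasDerivAt (Ici_mem_nhds hs)
  exact (convex_Ici a).mul_sub_le_image_sub_of_le_deriv
    (fun s hs => (hf s hs).continuousWithinAt)
    (fun s hs => (hderiv s hs).differentiableAt.differentiableWithinAt)
    (fun s hs => (hderiv s hs).deriv ▸ hc s (interior_subset hs)) a self_mem_Ici t ht ht

theorem stmt_8_general {m n : ℕ}
    (x : Fin n → ℝ → EuclideanSpace ℝ (Fin m))
    (xstar : ℝ → EuclideanSpace ℝ (Fin m))
    (hcons : ∀ i, Tendsto (fun t => x i t - xstar t) atTop (𝓝 0))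
    (q : Fin n → ℝ → ℝ)
    (hq0 : ∀ i, 0 < q i 0)
    (hq : ∀ i, ∀ t : ℝ, 0 ≤ t →
      HasDerivWithinAt (q i) (Real.arctan (Real.exp ‖x i t‖)) (Set.Ici 0) t) :
    ∀ i j, Tendsto (fun t => q i t / q j t) atTop (𝓝 1) := by
  intro i j
  have hgrowth : ∀ t, 0 ≤ t → π / 4 * t < q j t := fun t ht => by
    have := mul_sub_le_sub_of_le_derivWithin (hq j)
      (fun s _ => pi_div_four_le_arctan_exp (norm_nonneg (x j s))) ht
    linarith [hq0 j]
  have hq_ne : ∀ᶠ t in atTop, q j t ≠ 0 := by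
    filter_upwards [eventually_ge_atTop 0] with t ht
    exact (lt_of_le_of_lt (by positivity) (hgrowth t ht)).ne'
  have hid : (id : ℝ → ℝ) =O[atTop] q j := by
    refine IsBigO.of_bound (4 / π) ?_
    filter_upwards [eventually_ge_atTop 0] with t ht
    have hpt : 0 ≤ π / 4 * t := by positivity
    rw [id, norm_of_nonneg ht, norm_of_nonneg (by linarith [hgrowth t ht]),
      div_mul_eq_mul_div, le_div_iff₀ pi_pos]
    linarith [hgrowth t ht]
  have hderiv := tendsto_arctan_exp_norm_sub_arctan_exp_norm
    (by simpa using (hcons i).sub (hcons j) : Tendsto (fun t => x i t - x j t) atTop (𝓝 0))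
  have hequiv : q i ~[atTop] q j :=
    (isLittleO_id_of_tendsto_derivWithin_zero (fun t ht => (hq i t ht).sub (hq j t ht))
      hderiv).trans_isBigO hid
  exact (isEquivalent_iff_tendsto_one hq_ne).1 hequiv

/-- Consensus of the stepsizes: if the agents' states reach a consensus and
`q̇ᵢ(t) = arctan(exp‖xᵢ(t)‖)` with `qᵢ(0) > 0`, then `qᵢ(t)/qⱼ(t) → 1`. -/
theorem stmt_8 {m n : ℕ}
    (x : Fin n → ℝ → EuclideanSpace ℝ (Fin m))
    (hx_cont : ∀ i, ContinuousOn (x i) (Set.Ici (0 : ℝ)))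
    (xstar : ℝ → EuclideanSpace ℝ (Fin m))
    (hxstar : ∀ t : ℝ, xstar t = (n : ℝ)⁻¹ • ∑ i, x i t)
    (hcons : ∀ i, Tendsto (fun t => x i t - xstar t) atTop (𝓝 0))
    (q : Fin n → ℝ → ℝ)
    (hq0 : ∀ i, 0 < q i 0)
    (hq : ∀ i, ∀ t : ℝ, 0 ≤ t →
      HasDerivWithinAt (q i) (Real.arctan (Real.exp ‖x i t‖)) (Set.Ici 0) t) :
    ∀ i j, Tendsto (fun t => q i t / q j t) atTop (𝓝 1) :=
  stmt_8_general x xstar hcons q hq0 hq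
end

section
/- Let Y ⊆ ℝ^m be a closed bounded set, let H_1,…,H_n ⊆ ℝ^m be nonempty closed convex sets with H = ⋂_{i=1}^n H_i ≠ ∅, and let y : [0,∞) → ℝ^m satisfy y(t) ∈ Y for all t. If lim_{t→∞} ‖y(t) − P_{H_i}(y(t))‖ = 0 for every i ∈ {1,…,n}, then lim_{t→∞} ‖y(t) − P_H(y(t))‖ = 0. -/
open Filter Topology Bornology

/-- If `y(t)` stays in a closed bounded set and its distance to each `Hᵢ`
vanishes, then its distance to `H = ⋂ᵢ Hᵢ` vanishes. -/
theorem stmt_9 {m n : ℕ}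
    (Y : Set (EuclideanSpace ℝ (Fin m))) (hYcl : IsClosed Y) (hYbd : IsBounded Y)
    (H : Fin n → Set (EuclideanSpace ℝ (Fin m)))
    (hHne : ∀ i, (H i).Nonempty) (hHcl : ∀ i, IsClosed (H i)) (hHcv : ∀ i, Convex ℝ (H i))
    (hHcap : (⋂ i, H i).Nonempty)
    (P : Fin n → EuclideanSpace ℝ (Fin m) → EuclideanSpace ℝ (Fin m))
    (hP : ∀ i, IsProjOn (H i) (P i))
    (PH : EuclideanSpace ℝ (Fin m) → EuclideanSpace ℝ (Fin m))
    (hPH : IsProjOn (⋂ i, H i) PH)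
    (y : ℝ → EuclideanSpace ℝ (Fin m))
    (hy : ∀ t : ℝ, 0 ≤ t → y t ∈ Y)
    (hlim : ∀ i, Tendsto (fun t => ‖y t - P i (y t)‖) atTop (𝓝 0)) :
    Tendsto (fun t => ‖y t - PH (y t)‖) atTop (𝓝 0) := by
  by_contra hcon
  -- extract ε > 0 and times going to infinity where the distance stays ≥ ε
  rw [Metric.tendsto_nhds] at hcon
  push_neg at hcon
  obtain ⟨ε, hε, hfreq⟩ := hcon
  simp only [not_eventually, not_lt, frequently_atTop] at hfreq
  choose u hu1 hu2 using fun k : ℕ => hfreq (max 0 k)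
  have hu0 : ∀ k, (0:ℝ) ≤ u k := fun k => le_trans (le_max_left _ _) (hu1 k)
  have huk : ∀ k : ℕ, (k:ℝ) ≤ u k := fun k => le_trans (le_max_right _ _) (hu1 k)
  have huT : Tendsto u atTop atTop :=
    tendsto_atTop_mono huk tendsto_natCast_atTop_atTop
  have hεle : ∀ k, ε ≤ ‖y (u k) - PH (y (u k))‖ := by
    intro k
    simpa [Real.dist_eq, abs_of_nonneg (norm_nonneg _)] using hu2 k
  -- compactness of Y
  have hK : IsCompact Y := Metric.isCompact_of_isClosed_isBounded hYcl hYbd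
  have hmem : ∀ k, y (u k) ∈ Y := fun k => hy (u k) (hu0 k)
  obtain ⟨x, hxY, φ, hφ, hconv⟩ := hK.tendsto_subseq hmem
  have hφT : Tendsto (fun k => u (φ k)) atTop atTop :=
    huT.comp hφ.tendsto_atTop
  -- x belongs to every H i
  have hxH : x ∈ ⋂ i, H i := by
    refine Set.mem_iInter.2 fun i => ?_
    have hPi : Tendsto (fun k => P i (y (u (φ k)))) atTop (𝓝 x) := by
      rw [tendsto_iff_dist_tendsto_zero]
      have hb : Tendsto (fun k => ‖y (u (φ k)) - P i (y (u (φ k)))‖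
          + dist (y (u (φ k))) x) atTop (𝓝 0) := by
        have h1 : Tendsto (fun k => ‖y (u (φ k)) - P i (y (u (φ k)))‖) atTop (𝓝 0) :=
          (hlim i).comp hφT
        have h2 : Tendsto (fun k => dist (y (u (φ k))) x) atTop (𝓝 0) :=
          tendsto_iff_dist_tendsto_zero.1 hconv
        simpa using h1.add h2
      refine squeeze_zero (fun k => dist_nonneg) (fun k => ?_) hb
      calc dist (P i (y (u (φ k)))) x
          ≤ dist (P i (y (u (φ k)))) (y (u (φ k))) + dist (y (u (φ k))) x :=
            dist_triangle _ _ _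
        _ = ‖y (u (φ k)) - P i (y (u (φ k)))‖ + dist (y (u (φ k))) x := by
            rw [dist_comm, dist_eq_norm]
    exact (hHcl i).mem_of_tendsto hPi (Eventually.of_forall fun k => (hP i _).1)
  -- the distance to H along the subsequence tends to 0, contradicting ε ≤ ...
  have hg0 : Tendsto (fun k => ‖y (u (φ k)) - PH (y (u (φ k)))‖) atTop (𝓝 0) := by
    have hb : Tendsto (fun k => dist (y (u (φ k))) x) atTop (𝓝 0) :=
      tendsto_iff_dist_tendsto_zero.1 hconv
    refine squeeze_zero (fun k => norm_nonneg _) (fun k => ?_) hb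
    calc ‖y (u (φ k)) - PH (y (u (φ k)))‖ ≤ ‖y (u (φ k)) - x‖ :=
          (hPH (y (u (φ k)))).2 x hxH
      _ = dist (y (u (φ k))) x := (dist_eq_norm _ _).symm
  have : ε ≤ 0 :=
    le_of_tendsto_of_tendsto' tendsto_const_nhds hg0 fun k => hεle (φ k)
  linarith
end

section
/- Let a < b, let h₀ > 0, and let φ : [a,b] → ℝ be a nonnegative function that is Lipschitz continuous with constant h₀ (i.e., |φ(s) − φ(t)| ≤ h₀·|s − t| for all s, t ∈ [a,b]). Let h₁ = max_{t ∈ [a,b]} φ(t). Then ∫_a^b φ(s) ds ≥ min{ h₁²/(2h₀), h₀(b − a)²/8 }. -/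
/-!
Let `φ` attain its maximum `h₁` at `t₀`. By the Lipschitz bound, `φ` lies above the cone
`s ↦ h₁ - h₀ |s - t₀|`. The longer of the two pieces into which `t₀` cuts `[a, b]` has length at
least `(b - a) / 2`, so it contains an interval of length `L = min (h₁ / h₀) ((b - a) / 2)` with
endpoint `t₀`; on it the cone integrates to `h₁ L - h₀ L² / 2`, which is at least the claimed
minimum. Since `φ ≥ 0`, the integral over the rest of `[a, b]` only adds to this.
-/

open Set MeasureTheory

theorem integral_const_sub_mul_abs {L : ℝ} (hL : 0 ≤ L) (h k : ℝ) :
    ∫ u in (0 : ℝ)..L, (h - k * |u|) = h * L - k * L ^ 2 / 2 := by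
  have hcongr : EqOn (fun u : ℝ => h - k * |u|) (fun u => h - k * u) (uIcc 0 L) := by
    intro u hu
    rw [uIcc_of_le hL] at hu
    simp only [abs_of_nonneg hu.1]
  rw [intervalIntegral.integral_congr hcongr, intervalIntegral.integral_sub intervalIntegrable_const
    ((continuous_const_mul k).intervalIntegrable _ _), intervalIntegral.integral_const_mul]
  simp only [intervalIntegral.integral_const, integral_id, smul_eq_mul, sub_zero, ne_eq,
    OfNat.ofNat_ne_zero, not_false_eq_true, zero_pow]
  ring

theorem integral_const_sub_mul_abs_sub_of_endpoint {c L t : ℝ} (hL : 0 ≤ L)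
    (ht : t = c ∨ t = c + L) (h k : ℝ) :
    ∫ s in c..c + L, (h - k * |s - t|) = h * L - k * L ^ 2 / 2 := by
  rw [intervalIntegral.integral_comp_sub_right (fun u => h - k * |u|)]
  rcases ht with rfl | rfl
  · simpa using integral_const_sub_mul_abs hL h k
  · rw [show c - (c + L) = -L by ring, sub_self, ← neg_zero,
      ← intervalIntegral.integral_comp_neg]
    simpa using integral_const_sub_mul_abs hL h k

theorem min_le_mul_min_sub_mul_min_sq {h k ℓ : ℝ} (hk : 0 < k) (hℓ : 0 ≤ ℓ) :
    min (h ^ 2 / (2 * k)) (k * ℓ ^ 2 / 8)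
      ≤ h * min (h / k) (ℓ / 2) - k * min (h / k) (ℓ / 2) ^ 2 / 2 := by
  rcases le_total (h / k) (ℓ / 2) with hle | hle
  · rw [min_eq_left hle]
    exact (min_le_left _ _).trans_eq (by field_simp; ring)
  · rw [min_eq_right hle]
    have hkℓ : k * (ℓ / 2) ≤ h := (le_div_iff₀' hk).mp hle
    refine (min_le_right _ _).trans ?_
    nlinarith

theorem integral_le_integral_of_le_on_subinterval {f g : ℝ → ℝ} {a b c d : ℝ} (hac : a ≤ c)
    (hcd : c ≤ d) (hdb : d ≤ b) (hg : IntervalIntegrable g volume c d)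
    (hf : IntervalIntegrable f volume a b) (hf₀ : ∀ x ∈ Icc a b, 0 ≤ f x)
    (hgf : ∀ x ∈ Icc c d, g x ≤ f x) : ∫ x in c..d, g x ≤ ∫ x in a..b, f x := by
  have hab : a ≤ b := hac.trans (hcd.trans hdb)
  calc ∫ x in c..d, g x
      ≤ ∫ x in c..d, f x :=
        intervalIntegral.integral_mono_on hcd hg
          (hf.mono_set (by rw [uIcc_of_le hab, uIcc_of_le hcd]; gcongr)) hgf
    _ ≤ ∫ x in a..b, f x :=
        intervalIntegral.integral_mono_interval hac hcd hdb
          ((ae_restrict_iff' measurableSet_Ioc).mpr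
            (.of_forall fun x hx => hf₀ x (Ioc_subset_Icc_self hx))) hf

theorem stmt_12_general (a b h₀ : ℝ) (hh₀ : 0 < h₀)
    (φ : ℝ → ℝ)
    (hnn : ∀ t ∈ Set.Icc a b, 0 ≤ φ t)
    (hlip : ∀ s ∈ Set.Icc a b, ∀ t ∈ Set.Icc a b, |φ s - φ t| ≤ h₀ * |s - t|)
    (h₁ : ℝ) (hmax : IsGreatest (φ '' Set.Icc a b) h₁) :
    min (h₁ ^ 2 / (2 * h₀)) (h₀ * (b - a) ^ 2 / 8) ≤ ∫ s in a..b, φ s := by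
  obtain ⟨⟨t₀, ht₀, rfl⟩, -⟩ := hmax
  have hab : a ≤ b := ht₀.1.trans ht₀.2
  have hφ : IntervalIntegrable φ volume a b := by
    refine ContinuousOn.intervalIntegrable_of_Icc hab ?_
    refine (LipschitzOnWith.of_dist_le_mul (K := h₀.toNNReal) fun s hs t ht => ?_).continuousOn
    simpa [Real.dist_eq, hh₀.le] using hlip s hs t ht
  have hcone : ∀ s ∈ Icc a b, φ t₀ - h₀ * |s - t₀| ≤ φ s := fun s hs => by
    linarith [neg_abs_le (φ s - φ t₀), hlip s hs t₀ ht₀]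
  set L := min (φ t₀ / h₀) ((b - a) / 2)
  have hL : 0 ≤ L := le_min (div_nonneg (hnn t₀ ht₀) hh₀.le) (by linarith)
  obtain ⟨c, hac, hcb, hct₀⟩ : ∃ c, a ≤ c ∧ c + L ≤ b ∧ (t₀ = c ∨ t₀ = c + L) := by
    have hL₂ : L ≤ (b - a) / 2 := min_le_right _ _
    rcases le_total t₀ ((a + b) / 2) with hmid | hmid
    · exact ⟨t₀, ht₀.1, by linarith, Or.inl rfl⟩
    · exact ⟨t₀ - L, by linarith, by linarith [ht₀.2], Or.inr (by ring)⟩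
  calc min (φ t₀ ^ 2 / (2 * h₀)) (h₀ * (b - a) ^ 2 / 8)
      ≤ φ t₀ * L - h₀ * L ^ 2 / 2 := min_le_mul_min_sub_mul_min_sq hh₀ (by linarith)
    _ = ∫ s in c..c + L, (φ t₀ - h₀ * |s - t₀|) :=
      (integral_const_sub_mul_abs_sub_of_endpoint hL hct₀ _ _).symm
    _ ≤ ∫ s in a..b, φ s :=
      integral_le_integral_of_le_on_subinterval hac (by linarith) hcb
        ((by fun_prop : Continuous fun s => φ t₀ - h₀ * |s - t₀|).intervalIntegrable _ _) hφ hnn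
        fun s hs => hcone s ⟨hac.trans hs.1, hs.2.trans hcb⟩

/-- For a nonnegative `h₀`-Lipschitz function `φ` on `[a,b]` with maximum `h₁`,
`∫_a^b φ ≥ min (h₁²/(2h₀)) (h₀(b−a)²/8)`. -/
theorem stmt_12 (a b h₀ : ℝ) (hab : a < b) (hh₀ : 0 < h₀)
    (φ : ℝ → ℝ)
    (hnn : ∀ t ∈ Set.Icc a b, 0 ≤ φ t)
    (hlip : ∀ s ∈ Set.Icc a b, ∀ t ∈ Set.Icc a b, |φ s - φ t| ≤ h₀ * |s - t|)
    (h₁ : ℝ) (hmax : IsGreatest (φ '' Set.Icc a b) h₁) :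
    min (h₁ ^ 2 / (2 * h₀)) (h₀ * (b - a) ^ 2 / 8) ≤ ∫ s in a..b, φ s :=
  stmt_12_general a b h₀ hh₀ φ hnn hlip h₁ hmax
end

section
/- Let 0 < η ≤ 1 and let A = [a_{ij}] ∈ ℝ^{n×n} be a matrix with nonnegative entries such that a_{ii} ≥ η for all i, every nonzero entry a_{ij} is at least η, and ∑_{i=1}^n a_{ij} = 1 and ∑_{j=1}^n a_{ij} = 1 for all indices (A is doubly stochastic). Then for any vectors x_1,…,x_n ∈ ℝ^m: ∑_{i=1}^n ‖x_i‖² − ∑_{i=1}^n ‖∑_{j=1}^n a_{ij}·x_j‖² ≥ η² · ∑_{(i,j) : i ≠ j, a_{ij} ≠ 0} ‖x_i − x_j‖², where the last sum is over ordered pairs (i,j) with i ≠ j and a_{ij} ≠ 0. -/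
open scoped RealInnerProductSpace
open Finset

lemma key_id {E : Type*} [NormedAddCommGroup E] [InnerProductSpace ℝ E]
    {n : ℕ} (a : Fin n → ℝ) (ha : ∑ j, a j = 1) (x : Fin n → E) :
    ∑ j, a j * ‖x j‖ ^ 2 - ‖∑ j, a j • x j‖ ^ 2
      = (1/2) * ∑ j, ∑ k, a j * a k * ‖x j - x k‖ ^ 2 := by
  have h1 : ‖∑ j, a j • x j‖ ^ 2 = ∑ j, ∑ k, a j * a k * ⟪x j, x k⟫ := by
    rw [← real_inner_self_eq_norm_sq, sum_inner]
    refine Finset.sum_congr rfl fun j _ => ?_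
    rw [real_inner_smul_left, inner_sum, Finset.mul_sum]
    refine Finset.sum_congr rfl fun k _ => ?_
    rw [real_inner_smul_right]; ring
  have h2 : ∀ j k : Fin n, a j * a k * ‖x j - x k‖ ^ 2
      = a j * a k * ‖x j‖^2 + a j * a k * ‖x k‖^2 - 2 * (a j * a k * ⟪x j, x k⟫) := by
    intro j k
    rw [@norm_sub_sq_real]
    ring
  simp only [h2, Finset.sum_sub_distrib, Finset.sum_add_distrib, ← Finset.mul_sum,
    ← Finset.sum_mul, ha, h1]
  have h3 : ∀ j, ∑ k, a j * a k * ‖x k‖ ^ 2 = a j * ∑ k, a k * ‖x k‖ ^ 2 := by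
    intro j; rw [Finset.mul_sum]; exact Finset.sum_congr rfl fun k _ => by ring
  simp only [h3, ← Finset.sum_mul, ha]
  ring_nf

-- lower bound for a fixed row
lemma key_lb {E : Type*} [NormedAddCommGroup E] [InnerProductSpace ℝ E]
    {n : ℕ} (η : ℝ) (hη0 : 0 < η) (a : Fin n → ℝ) (hnn : ∀ j, 0 ≤ a j)
    (x : Fin n → E) (i : Fin n) (hdiag : η ≤ a i) (hnz : ∀ j, a j ≠ 0 → η ≤ a j) :
    ∑ j, (if i ≠ j ∧ a j ≠ 0 then η ^ 2 * ‖x i - x j‖ ^ 2 else 0)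
      ≤ (1/2) * ∑ j, ∑ k, a j * a k * ‖x j - x k‖ ^ 2 := by
  set f : Fin n → Fin n → ℝ := fun j k => a j * a k * ‖x j - x k‖ ^ 2 with hf
  have hfnn : ∀ j k, 0 ≤ f j k := fun j k =>
    mul_nonneg (mul_nonneg (hnn j) (hnn k)) (by positivity)
  have step1 : ∑ j, (if i ≠ j ∧ a j ≠ 0 then η ^ 2 * ‖x i - x j‖ ^ 2 else 0)
      ≤ ∑ j, f i j := by
    refine Finset.sum_le_sum fun j _ => ?_
    split_ifs with h
    · have h1 := hnz j h.2
      have h2 : (0:ℝ) ≤ ‖x i - x j‖ ^ 2 := by positivity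
      have : η ^ 2 ≤ a i * a j := by nlinarith
      exact mul_le_mul_of_nonneg_right this h2
    · exact hfnn i j
  have hsymm : ∀ j, f j i = f i j := fun j => by
    simp only [hf, norm_sub_rev (x j) (x i)]; ring
  have hfii : f i i = 0 := by simp [hf]
  have step2 : ∑ j, f i j ≤ (1/2) * ∑ j, ∑ k, f j k := by
    have hm : i ∈ (univ : Finset (Fin n)) := mem_univ i
    have e1 : ∑ j, ∑ k, f j k = (∑ k, f i k) + ∑ j ∈ univ.erase i, ∑ k, f j k := by
      rw [← Finset.add_sum_erase _ _ hm]
    have e2 : ∑ j ∈ univ.erase i, f j i ≤ ∑ j ∈ univ.erase i, ∑ k, f j k := by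
      refine Finset.sum_le_sum fun j _ => ?_
      exact Finset.single_le_sum (fun k _ => hfnn j k) (mem_univ i)
    have e3 : ∑ j ∈ univ.erase i, f j i = ∑ j, f i j := by
      rw [Finset.sum_erase _ (by rw [hfii])]
      exact Finset.sum_congr rfl fun j _ => hsymm j
    have := e2
    rw [e3] at this
    linarith [e1 ▸ (by linarith : (∑ k, f i k) + ∑ j, f i j ≤ (∑ k, f i k) + ∑ j ∈ univ.erase i, ∑ k, f j k)]
  exact le_trans step1 step2

/-- For a doubly stochastic matrix `A` with diagonal entries at least `η` and
all nonzero entries at least `η`, and any vectors `x₁,…,xₙ ∈ ℝ^m`,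
`∑ i ‖x i‖² − ∑ i ‖∑ j A i j • x j‖² ≥ η² ∑_{(i,j): i≠j, A i j ≠ 0} ‖x i − x j‖²`. -/
theorem stmt_13 {m n : ℕ} (η : ℝ) (hη0 : 0 < η) (hη1 : η ≤ 1)
    (A : Fin n → Fin n → ℝ)
    (hnn : ∀ i j, 0 ≤ A i j)
    (hdiag : ∀ i, η ≤ A i i)
    (hnz : ∀ i j, A i j ≠ 0 → η ≤ A i j)
    (hcol : ∀ j, ∑ i, A i j = 1)
    (hrow : ∀ i, ∑ j, A i j = 1)
    (x : Fin n → EuclideanSpace ℝ (Fin m)) :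
    η ^ 2 * ∑ i, ∑ j, (if i ≠ j ∧ A i j ≠ 0 then ‖x i - x j‖ ^ 2 else 0)
      ≤ ∑ i, ‖x i‖ ^ 2 - ∑ i, ‖∑ j, A i j • x j‖ ^ 2 := by
  have hfirst : ∑ i, ‖x i‖ ^ 2 = ∑ i, ∑ j, A i j * ‖x j‖ ^ 2 := by
    rw [Finset.sum_comm]
    refine Finset.sum_congr rfl fun j _ => ?_
    rw [← Finset.sum_mul, hcol j, one_mul]
  rw [hfirst, ← Finset.sum_sub_distrib]
  have hmul : η ^ 2 * ∑ i, ∑ j, (if i ≠ j ∧ A i j ≠ 0 then ‖x i - x j‖ ^ 2 else 0)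
      = ∑ i, ∑ j, (if i ≠ j ∧ A i j ≠ 0 then η ^ 2 * ‖x i - x j‖ ^ 2 else 0) := by
    rw [Finset.mul_sum]
    refine Finset.sum_congr rfl fun i _ => ?_
    rw [Finset.mul_sum]
    refine Finset.sum_congr rfl fun j _ => ?_
    split_ifs <;> simp
  rw [hmul]
  refine Finset.sum_le_sum fun i _ => ?_
  rw [key_id (A i) (hrow i) x]
  exact key_lb η hη0 (A i) (hnn i) x i (hdiag i) (hnz i)
end
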